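/- The q-dilogarithm Li_2(x;q) = ∑_{k=1}^∞ (q^k/(1-q^k)^2)·(x;q)_k satisfies the q-difference relation Li_2(qx;q) - Li_2(x;q) = -(x/(1-x))·S_q(x) for x ≠ 1, where 0 < q < 1. -/

import Mathlib

noncomputable def qPoch (q x : ℂ) (k : ℕ) : ℂ := ∏ j ∈ Finset.range k, (1 - x * q ^ j)

noncomputable def Sq (q : ℝ) (x : ℂ) : ℂ :=
  -∑' k : ℕ, ((q : ℂ) ^ (k + 1) / (1 - (q : ℂ) ^ (k + 1))) * qPoch q x (k + 1)

noncomputable def qDilog (q : ℝ) (x : ℂ) : ℂ :=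
  ∑' k : ℕ, ((q : ℂ) ^ (k + 1) / (1 - (q : ℂ) ^ (k + 1)) ^ 2) * qPoch q x (k + 1)

/-!
Since `(1 - x) (qx;q)_n = (x;q)_{n+1} = (1 - x q^n) (x;q)_n`, the shift `x ↦ qx` changes the
`n`-th Pochhammer symbol by `(qx;q)_n - (x;q)_n = x (1 - q^n) (x;q)_n / (1 - x)`. One factor
`1 - q^n` of the weight `q^n / (1 - q^n)^2` of `Li₂` cancels, leaving `x / (1 - x)` times the
`n`-th term of `-S_q(x)`. Both series converge absolutely because `(x;q)_n` is bounded by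
`exp (‖x‖ / (1 - ‖q‖))`.
-/

open Finset

lemma qPoch_succ (q x : ℂ) (n : ℕ) : qPoch q x (n + 1) = qPoch q x n * (1 - x * q ^ n) :=
  prod_range_succ _ _

lemma one_sub_mul_qPoch_mul (q x : ℂ) (n : ℕ) :
    (1 - x) * qPoch q (q * x) n = qPoch q x (n + 1) := by
  rw [qPoch, qPoch, prod_range_succ']
  simp only [pow_zero, mul_one, pow_succ]
  rw [mul_comm]
  congr 1
  exact prod_congr rfl fun j _ => by ring

lemma one_sub_mul_qPoch_mul_sub_qPoch (q x : ℂ) (n : ℕ) :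
    (1 - x) * (qPoch q (q * x) n - qPoch q x n) = x * (1 - q ^ n) * qPoch q x n := by
  rw [mul_sub, one_sub_mul_qPoch_mul, qPoch_succ]
  ring

lemma norm_qPoch_le_exp (q x : ℂ) (hq : ‖q‖ < 1) (n : ℕ) :
    ‖qPoch q x n‖ ≤ Real.exp (‖x‖ / (1 - ‖q‖)) := by
  have hfactor (j : ℕ) : ‖1 - x * q ^ j‖ ≤ Real.exp (‖x‖ * ‖q‖ ^ j) :=
    calc ‖1 - x * q ^ j‖ ≤ 1 + ‖x‖ * ‖q‖ ^ j := by
          simpa [norm_mul, norm_pow] using norm_sub_le (1 : ℂ) (x * q ^ j)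
      _ ≤ Real.exp (‖x‖ * ‖q‖ ^ j) := by linarith [Real.add_one_le_exp (‖x‖ * ‖q‖ ^ j)]
  have hgeom : ∑ j ∈ range n, ‖q‖ ^ j ≤ (1 - ‖q‖)⁻¹ := by
    rw [← tsum_geometric_of_lt_one (norm_nonneg q) hq]
    exact (summable_geometric_of_lt_one (norm_nonneg q) hq).sum_le_tsum _
      fun j _ => by positivity
  calc ‖qPoch q x n‖ = ∏ j ∈ range n, ‖1 - x * q ^ j‖ := norm_prod _ _
    _ ≤ ∏ j ∈ range n, Real.exp (‖x‖ * ‖q‖ ^ j) :=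
        prod_le_prod (fun j _ => norm_nonneg _) fun j _ => hfactor j
    _ = Real.exp (‖x‖ * ∑ j ∈ range n, ‖q‖ ^ j) := by rw [← Real.exp_sum, mul_sum]
    _ ≤ Real.exp (‖x‖ / (1 - ‖q‖)) := by
        rw [div_eq_mul_inv]
        gcongr

lemma summable_mul_qPoch {f : ℕ → ℂ} (hf : Summable fun k => ‖f k‖) (q x : ℂ) (hq : ‖q‖ < 1) :
    Summable fun k => f k * qPoch q x (k + 1) :=
  Summable.of_norm_bounded (hf.mul_right (Real.exp (‖x‖ / (1 - ‖q‖)))) fun k => by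
    rw [norm_mul]
    exact mul_le_mul_of_nonneg_left (norm_qPoch_le_exp q x hq _) (norm_nonneg _)

lemma one_sub_norm_le_norm_one_sub_pow (q : ℂ) (hq : ‖q‖ < 1) (k : ℕ) :
    1 - ‖q‖ ≤ ‖1 - q ^ (k + 1)‖ :=
  calc 1 - ‖q‖ ≤ 1 - ‖q‖ ^ (k + 1) := by
        gcongr
        exact pow_le_of_le_one (norm_nonneg q) hq.le k.succ_ne_zero
    _ = ‖(1 : ℂ)‖ - ‖q ^ (k + 1)‖ := by rw [norm_one, norm_pow]
    _ ≤ ‖1 - q ^ (k + 1)‖ := norm_sub_norm_le _ _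

lemma summable_norm_pow_div_one_sub_pow_sq (q : ℂ) (hq : ‖q‖ < 1) :
    Summable fun k : ℕ => ‖q ^ (k + 1) / (1 - q ^ (k + 1)) ^ 2‖ := by
  have hpos : 0 < 1 - ‖q‖ := sub_pos.mpr hq
  refine Summable.of_nonneg_of_le (fun _ => norm_nonneg _) (fun k => ?_)
    (((summable_geometric_of_lt_one (norm_nonneg q) hq).comp_injective
      (add_left_injective 1)).div_const ((1 - ‖q‖) ^ 2))
  rw [norm_div, norm_pow, norm_pow, Function.comp_apply]
  gcongr
  exact one_sub_norm_le_norm_one_sub_pow q hq k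

lemma qDilog_term_qdifference (q x : ℂ) (hx : x ≠ 1) (n : ℕ) (hqn : q ^ n ≠ 1) :
    q ^ n / (1 - q ^ n) ^ 2 * qPoch q (q * x) n - q ^ n / (1 - q ^ n) ^ 2 * qPoch q x n
      = x / (1 - x) * (q ^ n / (1 - q ^ n) * qPoch q x n) := by
  have hx' : 1 - x ≠ 0 := sub_ne_zero.mpr hx.symm
  have hqn' : 1 - q ^ n ≠ 0 := sub_ne_zero.mpr hqn.symm
  have hdiff : qPoch q (q * x) n - qPoch q x n = x * (1 - q ^ n) * qPoch q x n / (1 - x) := by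
    rw [eq_div_iff hx', mul_comm, one_sub_mul_qPoch_mul_sub_qPoch]
  rw [← mul_sub, hdiff]
  field_simp

theorem qdilog_qdifference (q : ℝ) (hq0 : 0 < q) (hq1 : q < 1) (x : ℂ) (hx : x ≠ 1) :
    qDilog q ((q : ℂ) * x) - qDilog q x = -(x / (1 - x)) * Sq q x := by
  have hq : ‖(q : ℂ)‖ < 1 := by rwa [Complex.norm_real, Real.norm_of_nonneg hq0.le]
  have hcoeff := summable_norm_pow_div_one_sub_pow_sq (q : ℂ) hq
  rw [qDilog, qDilog, ← (summable_mul_qPoch hcoeff _ _ hq).tsum_sub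
    (summable_mul_qPoch hcoeff _ _ hq), Sq, neg_mul, mul_neg, neg_neg, ← tsum_mul_left]
  refine tsum_congr fun k => qDilog_term_qdifference _ _ hx _ fun h => ?_
  have := one_sub_norm_le_norm_one_sub_pow (q : ℂ) hq k
  rw [h, sub_self, norm_zero] at this
  linarith [norm_nonneg (q : ℂ)]
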